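/- arXiv:1406.7146 — 5 statements merged into one kernel-verified Lean document; each statement's English description precedes it below -/
import Mathlib

section
/- Let P and Q be orthogonal projections on a Hilbert space H, and suppose λ ∈ σ(P + Q) with λ ≠ 0, 1. Then λI − P − (1/(λ−1)) P Q P is not invertible. -/
private lemma isUnit_one_sub_mul_swap' {A : Type*} [Ring A] (x y : A)
    (h : IsUnit (1 - x * y)) : IsUnit (1 - y * x) := by
  refine ⟨⟨1 - y * x, 1 + y * h.unit.inv * x, ?_, ?_⟩, rfl⟩
  · calc
      (1 - y * x) * (1 + y * (IsUnit.unit h).inv * x) =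
          1 - y * x + y * ((1 - x * y) * h.unit.inv) * x := by noncomm_ring
      _ = 1 := by simp only [Units.inv_eq_val_inv, IsUnit.mul_val_inv, mul_one, sub_add_cancel]
  · calc
      (1 + y * (IsUnit.unit h).inv * x) * (1 - y * x) =
          1 - y * x + y * (h.unit.inv * (1 - x * y)) * x := by noncomm_ring
      _ = 1 := by simp only [Units.inv_eq_val_inv, IsUnit.val_inv_mul, mul_one, sub_add_cancel]

theorem spectrum_sum_proj_transfer {H : Type*} [NormedAddCommGroup H] [InnerProductSpace ℂ H]
    [CompleteSpace H] (P Q : H →L[ℂ] H)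
    (hP : P ∘L P = P) (hPa : ContinuousLinearMap.adjoint P = P)
    (hQ : Q ∘L Q = Q) (hQa : ContinuousLinearMap.adjoint Q = Q)
    (lam : ℂ) (h0 : lam ≠ 0) (h1 : lam ≠ 1) (hlam : lam ∈ spectrum ℂ (P + Q)) :
    ¬ IsUnit (lam • (1 : H →L[ℂ] H) - P - (lam - 1)⁻¹ • (P ∘L Q ∘L P)) := by
  intro hS
  have h1' : lam - 1 ≠ 0 := sub_ne_zero.mpr h1
  -- u = lam•1 - Q is a unit with inverse v
  set u : H →L[ℂ] H := lam • 1 - Q with hu_def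
  set v : H →L[ℂ] H := lam⁻¹ • 1 + (lam⁻¹ * (lam - 1)⁻¹) • Q with hv_def
  have hPmul : P * P = P := hP
  have hQmul : Q * Q = Q := hQ
  have huv : u * v = 1 := by
    rw [hu_def, hv_def]
    simp only [mul_add, add_mul, sub_mul, mul_sub, smul_mul_assoc, mul_smul_comm, one_mul,
      mul_one, smul_smul, hQmul]
    match_scalars <;> field_simp <;> ring
  have hvu : v * u = 1 := by
    rw [hu_def, hv_def]
    simp only [mul_add, add_mul, sub_mul, mul_sub, smul_mul_assoc, mul_smul_comm, one_mul,
      mul_one, smul_smul, hQmul]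
    match_scalars <;> field_simp <;> ring
  have hu : IsUnit u := ⟨⟨u, v, huv, hvu⟩, rfl⟩
  -- lam⁻¹ • S = 1 - (P * v) * P
  have hPvP : (1 : H →L[ℂ] H) - (P * v) * P
      = lam⁻¹ • (lam • (1 : H →L[ℂ] H) - P - (lam - 1)⁻¹ • (P ∘L Q ∘L P)) := by
    rw [hv_def]
    have hcomp : (P ∘L Q ∘L P) = P * Q * P := rfl
    simp only [hcomp, mul_add, add_mul, smul_mul_assoc, mul_smul_comm, mul_one, one_mul,
      smul_sub, smul_smul, hPmul, mul_assoc]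
    match_scalars <;> field_simp <;> ring
  have hS1 : IsUnit ((1 : H →L[ℂ] H) - (P * v) * P) := by
    rw [hPvP]
    exact (IsUnit.smul (Units.mk0 lam⁻¹ (inv_ne_zero h0)) hS)
  have hS2 : IsUnit ((1 : H →L[ℂ] H) - P * v) := by
    have := isUnit_one_sub_mul_swap' (P * v) P hS1
    rwa [← mul_assoc, hPmul] at this
  have hS3 : IsUnit ((1 : H →L[ℂ] H) - v * P) := isUnit_one_sub_mul_swap' P v hS2
  -- T = lam•1 - (P + Q) = u * (1 - v*P)
  have hT : lam • (1 : H →L[ℂ] H) - (P + Q) = u * ((1 : H →L[ℂ] H) - v * P) := by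
    rw [mul_sub, mul_one, ← mul_assoc, huv, one_mul, hu_def]
    abel
  have hTunit : IsUnit (lam • (1 : H →L[ℂ] H) - (P + Q)) := by
    rw [hT]; exact hu.mul hS3
  rw [spectrum.mem_iff, Algebra.algebraMap_eq_smul_one] at hlam
  exact hlam hTunit
end

section
/- Let P and Q be orthogonal projections on a Hilbert space H with P Q P compact, and suppose λ ∈ σ(P + Q) with λ ≠ 0 and λ ≠ 1. Then there exists a nonzero vector g in the range of P such that P Q P g = (λ−1)² g; in particular (λ−1)² is an eigenvalue of P Q P. -/
/-!
With `A = P + Q`, idempotency gives `P (A - (2 - λ)) (A - λ) = (PQP - (λ - 1)²) P` and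
`(1 - λ) Q = Q (A - λ) - Q P`. If `(λ - 1)² ≠ 0` were not an eigenvalue of the compact operator
`PQP`, the Fredholm alternative would make `PQP - (λ - 1)²` bounded below; the first identity then
bounds `‖P x‖`, and the second `‖Q x‖`, by a multiple of `‖(A - λ) x‖`, so `A - λ` would be
bounded below. But a bounded-below normal operator is invertible (its range is closed, with
orthogonal complement `ker (A - λ)* = ker (A - λ) = 0`), contradicting `λ ∈ σ(A)`. Finally an
eigenvector `g` of `PQP` for a nonzero eigenvalue lies in the range of `P`.
-/

open ContinuousLinearMap Module End

theorem IsIdempotentElem.mul_add_sub_smul_one_mul_add_sub_smul_one {R A : Type*} [CommRing R]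
    [Ring A] [Module R A] [IsScalarTower R A A] [SMulCommClass R A A] {P Q : A}
    (hP : IsIdempotentElem P) (hQ : IsIdempotentElem Q) (lam : R) :
    P * (P + Q - (2 - lam) • 1) * (P + Q - lam • 1) = (P * Q * P - (lam - 1) ^ 2 • 1) * P := by
  have hPQQ : P * Q * Q = P * Q := by rw [mul_assoc, hQ.eq]
  have hPQPP : P * Q * P * P = P * Q * P := by rw [mul_assoc, hP.eq]
  simp only [mul_add, add_mul, mul_sub, sub_mul, mul_smul_comm, smul_mul_assoc, mul_one, one_mul,
    hP.eq, hPQQ, hPQPP]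
  module

section Normed

variable {𝕜 X : Type*} [NontriviallyNormedField 𝕜] [NormedAddCommGroup X] [NormedSpace 𝕜 X]

theorem norm_mul_norm_one_sub_mul_norm_le {P Q : X →L[𝕜] X} (hQ : IsIdempotentElem Q) (lam : 𝕜)
    (x : X) :
    ‖lam‖ * ‖1 - lam‖ * ‖x‖ ≤ (‖1 - lam‖ + ‖Q‖) * (‖P x‖ + ‖(P + Q - lam • 1 : X →L[𝕜] X) x‖) := by
  set e := (P + Q - lam • 1 : X →L[𝕜] X) x
  have hQx : (1 - lam) • Q x = Q e - Q (P x) := by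
    have hQQx : Q (Q x) = Q x := congr($(hQ.eq) x)
    simp only [e, sub_apply, add_apply, smul_apply, one_apply_eq_self, map_sub, map_add,
      map_smul, hQQx]
    module
  have hx : lam • x = P x + Q x - e := by
    simp only [e, sub_apply, add_apply, smul_apply, one_apply_eq_self]
    module
  have hQ_bound : ‖1 - lam‖ * ‖Q x‖ ≤ ‖Q‖ * (‖P x‖ + ‖e‖) := calc
    ‖1 - lam‖ * ‖Q x‖ = ‖Q e - Q (P x)‖ := by rw [← norm_smul, hQx]
    _ ≤ ‖Q‖ * ‖e‖ + ‖Q‖ * ‖P x‖ :=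
      (norm_sub_le _ _).trans (add_le_add (Q.le_opNorm e) (Q.le_opNorm (P x)))
    _ = ‖Q‖ * (‖P x‖ + ‖e‖) := by ring
  have hx_bound : ‖lam‖ * ‖x‖ ≤ ‖P x‖ + ‖Q x‖ + ‖e‖ := calc
    ‖lam‖ * ‖x‖ = ‖P x + Q x - e‖ := by rw [← norm_smul, hx]
    _ ≤ ‖P x‖ + ‖Q x‖ + ‖e‖ := (norm_sub_le _ _).trans (by gcongr; exact norm_add_le _ _)
  nlinarith [norm_nonneg (1 - lam)]

theorem exists_antilipschitz_add_sub_smul_one {P Q : X →L[𝕜] X} (hP : IsIdempotentElem P)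
    (hQ : IsIdempotentElem Q) {lam : 𝕜} (h0 : lam ≠ 0) (h1 : lam ≠ 1)
    (hPQP : ∃ K, AntilipschitzWith K (P * Q * P - (lam - 1) ^ 2 • 1 : X →L[𝕜] X)) :
    ∃ K, AntilipschitzWith K (P + Q - lam • 1 : X →L[𝕜] X) := by
  rw [antilipschitzWith_iff_exists_mul_le_norm] at hPQP ⊢
  obtain ⟨c, hc, hPQP⟩ := hPQP
  set B := P * (P + Q - (2 - lam) • 1)
  have hP_bound (x : X) : c * ‖P x‖ ≤ ‖B‖ * ‖(P + Q - lam • 1 : X →L[𝕜] X) x‖ := calc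
    c * ‖P x‖ ≤ ‖(P * Q * P - (lam - 1) ^ 2 • 1 : X →L[𝕜] X) (P x)‖ := hPQP (P x)
    _ = ‖B ((P + Q - lam • 1 : X →L[𝕜] X) x)‖ :=
      congr(‖$(hP.mul_add_sub_smul_one_mul_add_sub_smul_one hQ lam) x‖).symm
    _ ≤ ‖B‖ * ‖(P + Q - lam • 1 : X →L[𝕜] X) x‖ := B.le_opNorm _
  have hlam : 0 < ‖lam‖ := norm_pos_iff.mpr h0
  have hlam1 : 0 < ‖1 - lam‖ := norm_pos_iff.mpr (sub_ne_zero.mpr h1.symm)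
  refine ⟨‖lam‖ * ‖1 - lam‖ * c / ((‖1 - lam‖ + ‖Q‖) * (‖B‖ + c)), by positivity, fun x ↦ ?_⟩
  rw [div_mul_eq_mul_div, div_le_iff₀ (by positivity)]
  have hx := norm_mul_norm_one_sub_mul_norm_le (P := P) hQ lam x
  set e := ‖(P + Q - lam • 1 : X →L[𝕜] X) x‖
  calc ‖lam‖ * ‖1 - lam‖ * c * ‖x‖ ≤ (‖1 - lam‖ + ‖Q‖) * (c * ‖P x‖ + c * e) := by
        nlinarith
    _ ≤ (‖1 - lam‖ + ‖Q‖) * (‖B‖ * e + c * e) := by gcongr ?_ * (?_ + _); exact hP_bound x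
    _ = e * ((‖1 - lam‖ + ‖Q‖) * (‖B‖ + c)) := by ring

end Normed

section InnerProduct

variable {𝕜 E : Type*} [RCLike 𝕜] [NormedAddCommGroup E] [InnerProductSpace 𝕜 E] [CompleteSpace E]

theorem IsStarNormal.isUnit_of_antilipschitz {T : E →L[𝕜] E} (hT : IsStarNormal T) {K : NNReal}
    (hK : AntilipschitzWith K T) : IsUnit T := by
  rw [isUnit_iff_bijective, bijective_iff_dense_range_and_antilipschitz]
  refine ⟨?_, K, hK⟩
  rw [Submodule.topologicalClosure_eq_top_iff, hT.orthogonal_range, LinearMap.ker_eq_bot]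
  exact hK.injective

theorem IsSelfAdjoint.not_antilipschitz_sub_smul_one {A : E →L[𝕜] E} (hA : IsSelfAdjoint A)
    {lam : 𝕜} (hlam : lam ∈ spectrum 𝕜 A) (K : NNReal) :
    ¬ AntilipschitzWith K (A - lam • 1 : E →L[𝕜] E) := by
  have hN : IsStarNormal (A - lam • 1 : E →L[𝕜] E) := by
    have := hA.isStarNormal
    refine Commute.isStarNormal_sub ?_
    rw [star_smul, star_one]
    exact (Commute.one_right _).smul_right _
  intro hK
  apply spectrum.mem_iff.mp hlam
  rw [Algebra.algebraMap_eq_smul_one, ← neg_sub, IsUnit.neg_iff]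
  exact hN.isUnit_of_antilipschitz hK

end InnerProduct

theorem eigenvalue_of_spectrum_sum_proj {H : Type*} [NormedAddCommGroup H]
    [InnerProductSpace ℂ H] [CompleteSpace H] (P Q : H →L[ℂ] H)
    (hP : P ∘L P = P) (hPa : ContinuousLinearMap.adjoint P = P)
    (hQ : Q ∘L Q = Q) (hQa : ContinuousLinearMap.adjoint Q = Q)
    (hcpt : IsCompactOperator (P ∘L Q ∘L P))
    (lam : ℂ) (h0 : lam ≠ 0) (h1 : lam ≠ 1) (hlam : lam ∈ spectrum ℂ (P + Q)) :
    ∃ g : H, g ≠ 0 ∧ (∃ h : H, P h = g) ∧ (P ∘L Q ∘L P) g = (lam - 1) ^ 2 • g := by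
  have hsq : (lam - 1) ^ 2 ≠ 0 := pow_ne_zero _ (sub_ne_zero.mpr h1)
  have hA : IsSelfAdjoint (P + Q) := by
    refine IsSelfAdjoint.add ?_ ?_ <;> rwa [IsSelfAdjoint, star_eq_adjoint]
  have hT : HasEigenvalue ((P ∘L Q ∘L P : H →L[ℂ] H) : End ℂ H) ((lam - 1) ^ 2) := by
    by_contra hT
    have hPQP := hcpt.antilipschitz_of_not_hasEigenvalue hsq hT
    rw [← mul_def, ← mul_def, ← mul_assoc] at hPQP
    obtain ⟨K, hK⟩ := exists_antilipschitz_add_sub_smul_one hP hQ h0 h1 hPQP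
    exact hA.not_antilipschitz_sub_smul_one hlam K hK
  obtain ⟨g, hg, hg0⟩ := hT.exists_hasEigenvector
  have hTg : (P ∘L Q ∘L P) g = (lam - 1) ^ 2 • g := mem_eigenspace_iff.mp hg
  refine ⟨g, hg0, ⟨((lam - 1) ^ 2)⁻¹ • (Q ∘L P) g, ?_⟩, hTg⟩
  rw [map_smul, ← comp_apply, hTg, inv_smul_smul₀ hsq]
end

section
/- Let P and Q be orthogonal projections on a Hilbert space H, let μ ∈ (0,1), and suppose there exist vectors ψ ≠ 0 and ψ̃ with P ψ̃ = ψ and Q ψ = μ ψ̃. Then for λ = 1 + √μ (and also λ = 1 − √μ), the vector f = ψ + (λ−1) ψ̃ is a nonzero eigenvector of P + Q with eigenvalue λ. -/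
/-!
Both projections act on the plane spanned by `ψ` and `ψt`: `P` sends both vectors to `ψ`, and
`Q` fixes `ψt` (it lies in the range of `Q`) and sends `ψ` to `μ ψt`. On this plane `P + Q` has
the matrix `[[1, 1], [μ, 1]]`, whose eigenvalues are `1 ± √μ`, with eigenvectors
`ψ + (λ - 1) ψt`. Such a vector is nonzero because `P` maps it to `λ ψ ≠ 0`.
-/

namespace ContinuousLinearMap

variable {R M : Type*} [Semiring R] [TopologicalSpace M] [AddCommMonoid M] [Module R M]

theorem apply_eq_self_of_comp_self {P : M →L[R] M} (hP : P ∘L P = P) {x y : M} (hy : P x = y) :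
    P y = y := by
  rw [← hy, ← comp_apply, hP]

theorem apply_eq_self_of_apply_eq_smul {K : Type*} [DivisionRing K] [Module K M]
    {Q : M →L[K] M} (hQ : Q ∘L Q = Q) {c : K} (hc : c ≠ 0) {x y : M} (hxy : Q x = c • y) :
    Q y = y := by
  have h := apply_eq_self_of_comp_self hQ hxy
  rw [map_smul] at h
  exact smul_right_injective M hc h

end ContinuousLinearMap

section PlaneAction

variable {R M F : Type*} [CommRing R] [AddCommGroup M] [Module R M] [FunLike F M M]
  [LinearMapClass F R M M] {P Q : F} {ψ ψt : M}

theorem apply_add_smul_eq_smul (hPψ : P ψ = ψ) (hPψt : P ψt = ψ) (c : R) :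
    P (ψ + c • ψt) = (1 + c) • ψ := by
  rw [map_add, map_smul, hPψ, hPψt, add_smul, one_smul]

theorem apply_add_apply_eq_smul_of_sq_sub_one_eq (hPψ : P ψ = ψ) (hPψt : P ψt = ψ) {μ : R}
    (hQψ : Q ψ = μ • ψt) (hQψt : Q ψt = ψt) {lam : R} (hlam : (lam - 1) ^ 2 = μ) :
    P (ψ + (lam - 1) • ψt) + Q (ψ + (lam - 1) • ψt) = lam • (ψ + (lam - 1) • ψt) := by
  rw [apply_add_smul_eq_smul hPψ hPψt, map_add, map_smul, hQψ, hQψt, ← hlam]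
  module

end PlaneAction

theorem Complex.sq_sub_one_eq_of_eq_one_add_or_sub_sqrt {μ : ℝ} (hμ : 0 ≤ μ) {lam : ℂ}
    (hlam : lam = 1 + (Real.sqrt μ : ℂ) ∨ lam = 1 - (Real.sqrt μ : ℂ)) :
    (lam - 1) ^ 2 = (μ : ℂ) := by
  have hsq : (Real.sqrt μ : ℂ) ^ 2 = (μ : ℂ) := by exact_mod_cast Real.sq_sqrt hμ
  rcases hlam with rfl | rfl <;> rw [← hsq] <;> ring

theorem Complex.ne_zero_of_eq_one_add_or_sub_sqrt {μ : ℝ} (hμ : μ ≠ 1) {lam : ℂ}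
    (hlam : lam = 1 + (Real.sqrt μ : ℂ) ∨ lam = 1 - (Real.sqrt μ : ℂ)) : lam ≠ 0 := by
  rcases hlam with rfl | rfl
  · exact_mod_cast (add_pos_of_pos_of_nonneg one_pos (Real.sqrt_nonneg μ)).ne'
  · have hs : Real.sqrt μ ≠ 1 := fun h => hμ (Real.sqrt_eq_one.mp h)
    exact_mod_cast sub_ne_zero.mpr hs.symm

theorem eigenvector_of_sum_proj_general {H : Type*} [NormedAddCommGroup H] [InnerProductSpace ℂ H]
    (P Q : H →L[ℂ] H)
    (hP : P ∘L P = P)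
    (hQ : Q ∘L Q = Q)
    (μ : ℝ) (hμ0 : 0 < μ) (hμ1 : μ < 1) (ψ ψt : H) (hψ : ψ ≠ 0)
    (h1 : P ψt = ψ) (h2 : Q ψ = (μ : ℂ) • ψt) :
    (∀ lam : ℂ, (lam = 1 + (Real.sqrt μ : ℂ) ∨ lam = 1 - (Real.sqrt μ : ℂ)) →
      ψ + (lam - 1) • ψt ≠ 0 ∧ (P + Q) (ψ + (lam - 1) • ψt) = lam • (ψ + (lam - 1) • ψt)) := by
  intro lam hlam
  have hPψ : P ψ = ψ := P.apply_eq_self_of_comp_self hP h1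
  have hQψt : Q ψt = ψt :=
    Q.apply_eq_self_of_apply_eq_smul hQ (by exact_mod_cast hμ0.ne') h2
  have hlam0 : lam ≠ 0 := Complex.ne_zero_of_eq_one_add_or_sub_sqrt hμ1.ne hlam
  refine ⟨fun hf => ?_, ?_⟩
  · have hPf := apply_add_smul_eq_smul hPψ h1 (lam - 1)
    rw [hf, map_zero, add_sub_cancel] at hPf
    exact smul_ne_zero hlam0 hψ hPf.symm
  · exact apply_add_apply_eq_smul_of_sq_sub_one_eq hPψ h1 h2 hQψt
      (Complex.sq_sub_one_eq_of_eq_one_add_or_sub_sqrt hμ0.le hlam)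

theorem eigenvector_of_sum_proj {H : Type*} [NormedAddCommGroup H] [InnerProductSpace ℂ H]
    [CompleteSpace H] (P Q : H →L[ℂ] H)
    (hP : P ∘L P = P) (hPa : ContinuousLinearMap.adjoint P = P)
    (hQ : Q ∘L Q = Q) (hQa : ContinuousLinearMap.adjoint Q = Q)
    (μ : ℝ) (hμ0 : 0 < μ) (hμ1 : μ < 1) (ψ ψt : H) (hψ : ψ ≠ 0)
    (h1 : P ψt = ψ) (h2 : Q ψ = (μ : ℂ) • ψt) :
    (∀ lam : ℂ, (lam = 1 + (Real.sqrt μ : ℂ) ∨ lam = 1 - (Real.sqrt μ : ℂ)) →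
      ψ + (lam - 1) • ψt ≠ 0 ∧ (P + Q) (ψ + (lam - 1) • ψt) = lam • (ψ + (lam - 1) • ψt)) :=
  eigenvector_of_sum_proj_general P Q hP hQ μ hμ0 hμ1 ψ ψt hψ h1 h2
end

section
/- Let P and Q be orthogonal projections on a Hilbert space H such that P Q P is compact, and let μ₀ ∈ [0,1) be the largest eigenvalue of P Q P (or 0 if there are none). Then for every f ∈ H, (1 − √μ₀)‖f‖² ≤ ⟨(2I − P − Q)f, f⟩. -/
/-!
`T = P Q P` is compact and positive. The norm of a positive operator lies in its spectrum, and by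
the Fredholm alternative a nonzero spectral value of a compact operator is an eigenvalue; hence
`‖T‖ ≤ μ₀`, and the C*-identity `‖Q P‖² = ‖(Q P)⋆ (Q P)‖ = ‖T‖` gives `‖Q P‖ ≤ √μ₀`.
Since `re ⟪(2 - P - Q) f, f⟫ = 2 ‖f‖² - ‖P f‖² - ‖Q f‖²`, it remains to bound
`‖P f‖² + ‖Q f‖² ≤ (1 + ‖Q P‖) ‖f‖²`, which follows from `⟪P f, Q f⟫ = ⟪Q P (P f), Q f⟫`.
-/

open ContinuousLinearMap Module.End RCLike
open scoped InnerProductSpace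

namespace IsStarProjection

variable {𝕜 E : Type*} [RCLike 𝕜] [NormedAddCommGroup E] [InnerProductSpace 𝕜 E] [CompleteSpace E]
  {p q : E →L[𝕜] E}

theorem re_inner_apply_self (hp : IsStarProjection p) (x : E) : re ⟪p x, x⟫_𝕜 = ‖p x‖ ^ 2 := by
  have hpp : p (p x) = p x := congr($(hp.isIdempotentElem.eq) x)
  calc re ⟪p x, x⟫_𝕜 = re ⟪p (p x), x⟫_𝕜 := by rw [hpp]
    _ = re ⟪p x, p x⟫_𝕜 := congrArg re (hp.isSelfAdjoint.isSymmetric (p x) x)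
    _ = ‖p x‖ ^ 2 := inner_self_eq_norm_sq _

theorem re_inner_apply_apply_le (hp : IsStarProjection p) (hq : IsStarProjection q) (x : E) :
    re ⟪p x, q x⟫_𝕜 ≤ ‖q ∘L p‖ * ‖p x‖ * ‖q x‖ := by
  have hpp : p (p x) = p x := congr($(hp.isIdempotentElem.eq) x)
  have hqq : q (q x) = q x := congr($(hq.isIdempotentElem.eq) x)
  have : ⟪p x, q x⟫_𝕜 = ⟪(q ∘L p) (p x), q x⟫_𝕜 := by
    rw [comp_apply, hpp]
    exact (congrArg (⟪p x, ·⟫_𝕜) hqq).symm.trans (hq.isSelfAdjoint.isSymmetric (p x) (q x)).symm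
  calc re ⟪p x, q x⟫_𝕜 ≤ ‖(q ∘L p) (p x)‖ * ‖q x‖ := by
        rw [this]; exact re_inner_le_norm _ _
    _ ≤ ‖q ∘L p‖ * ‖p x‖ * ‖q x‖ := by gcongr; exact le_opNorm _ _

/-- With `u = p x`, `v = q x` and `t = ‖u‖² + ‖v‖² = re ⟪u + v, x⟫`, one has
`‖u + v‖² ≤ t + 2 ‖q p‖ ‖u‖ ‖v‖ ≤ (1 + ‖q p‖) t`, so `t² ≤ ‖u + v‖² ‖x‖² ≤ (1 + ‖q p‖) t ‖x‖²`. -/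
theorem norm_apply_sq_add_norm_apply_sq_le (hp : IsStarProjection p) (hq : IsStarProjection q)
    (x : E) : ‖p x‖ ^ 2 + ‖q x‖ ^ 2 ≤ (1 + ‖q ∘L p‖) * ‖x‖ ^ 2 := by
  set u := p x
  set v := q x
  set t := ‖u‖ ^ 2 + ‖v‖ ^ 2
  have ht : t = re ⟪u + v, x⟫_𝕜 := by
    rw [inner_add_left, map_add, hp.re_inner_apply_self, hq.re_inner_apply_self]
  have huv : ‖u + v‖ ^ 2 ≤ (1 + ‖q ∘L p‖) * t := by
    rw [@norm_add_sq 𝕜]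
    nlinarith [hp.re_inner_apply_apply_le hq x, sq_nonneg (‖u‖ - ‖v‖), norm_nonneg (q ∘L p)]
  have ht0 : 0 ≤ t := by positivity
  have hsq : t ^ 2 ≤ (1 + ‖q ∘L p‖) * t * ‖x‖ ^ 2 :=
    calc t ^ 2 ≤ (‖u + v‖ * ‖x‖) ^ 2 := pow_le_pow_left₀ ht0 (ht ▸ re_inner_le_norm _ _) 2
      _ = ‖u + v‖ ^ 2 * ‖x‖ ^ 2 := by ring
      _ ≤ (1 + ‖q ∘L p‖) * t * ‖x‖ ^ 2 := by gcongr
  rcases ht0.eq_or_lt with h0 | hpos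
  · rw [← h0]; positivity
  · nlinarith

theorem one_sub_norm_comp_mul_norm_sq_le (hp : IsStarProjection p) (hq : IsStarProjection q)
    (x : E) : (1 - ‖q ∘L p‖) * ‖x‖ ^ 2 ≤ re ⟪((2 : 𝕜) • (1 : E →L[𝕜] E) - p - q) x, x⟫_𝕜 := by
  have hform : re ⟪((2 : 𝕜) • (1 : E →L[𝕜] E) - p - q) x, x⟫_𝕜
      = 2 * ‖x‖ ^ 2 - (‖p x‖ ^ 2 + ‖q x‖ ^ 2) := by
    simp only [sub_apply, smul_apply, one_apply_eq_self, inner_sub_left, inner_smul_left,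
      inner_self_eq_norm_sq_to_K, map_sub, mul_re, conj_re, ofNat_re, re_ofReal_pow, conj_im,
      ofNat_im, neg_zero, im_ofReal_pow, mul_zero, sub_zero, hp.re_inner_apply_self,
      hq.re_inner_apply_self]
    ring
  rw [hform]
  linarith [hp.norm_apply_sq_add_norm_apply_sq_le hq x]

theorem norm_comp_sq (hp : IsStarProjection p) (hq : IsStarProjection q) :
    ‖q ∘L p‖ ^ 2 = ‖p ∘L q ∘L p‖ := by
  have : star (q * p) * (q * p) = p * (q * p) := by
    rw [star_mul, hp.isSelfAdjoint.star_eq, hq.isSelfAdjoint.star_eq, mul_assoc, ← mul_assoc q,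
      hq.isIdempotentElem.eq]
  rw [sq, ← CStarRing.norm_star_mul_self]
  exact congrArg norm this

theorem isPositive_comp_comp (hp : IsStarProjection p) (hq : IsStarProjection q) :
    (p ∘L q ∘L p).IsPositive := by
  simpa only [hp.isSelfAdjoint.adjoint_eq] using (IsPositive.of_isStarProjection hq).conj_adjoint p

end IsStarProjection

namespace IsCompactOperator

variable {H : Type*} [NormedAddCommGroup H] [InnerProductSpace ℂ H] [CompleteSpace H]
  {T : H →L[ℂ] H}

theorem hasEigenvalue_norm_of_isPositive (hT : IsCompactOperator T) (hpos : T.IsPositive)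
    (h0 : T ≠ 0) : HasEigenvalue (T : Module.End ℂ H) ‖T‖ := by
  have : Nontrivial (H →L[ℂ] H) := nontrivial_of_ne T 0 h0
  have hspec : ‖T‖ ∈ spectrum ℝ T :=
    CStarAlgebra.norm_mem_spectrum_of_nonneg ((nonneg_iff_isPositive T).mpr hpos)
  rw [hT.hasEigenvalue_iff_mem_spectrum (by exact_mod_cast norm_ne_zero_iff.mpr h0)]
  exact (spectrum.algebraMap_mem_iff ℂ).mpr hspec

theorem norm_le_of_forall_hasEigenvalue_le (hT : IsCompactOperator T) (hpos : T.IsPositive)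
    {μ₀ : ℝ} (hμ₀ : 0 ≤ μ₀) (h : ∀ μ : ℝ, HasEigenvalue (T : Module.End ℂ H) μ → μ ≤ μ₀) :
    ‖T‖ ≤ μ₀ := by
  rcases eq_or_ne T 0 with rfl | h0
  · simpa using hμ₀
  · exact h _ (hT.hasEigenvalue_norm_of_isPositive hpos h0)

end IsCompactOperator

theorem spectral_lower_bound_two_proj_general {H : Type*} [NormedAddCommGroup H]
    [InnerProductSpace ℂ H] [CompleteSpace H] (P Q : H →L[ℂ] H)
    (hP : P ∘L P = P) (hPa : ContinuousLinearMap.adjoint P = P)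
    (hQ : Q ∘L Q = Q) (hQa : ContinuousLinearMap.adjoint Q = Q)
    (hcpt : IsCompactOperator (P ∘L Q ∘L P))
    (μ₀ : ℝ) (hμ₀0 : 0 ≤ μ₀)
    (hmax : ∀ (μ : ℝ) (g : H), g ≠ 0 → (P ∘L Q ∘L P) g = (μ : ℂ) • g → μ ≤ μ₀) (f : H) :
    (1 - Real.sqrt μ₀) * ‖f‖ ^ 2
      ≤ (inner ℂ (((2 : ℂ) • (1 : H →L[ℂ] H) - P - Q) f) f : ℂ).re := by
  have hP' : IsStarProjection P := ⟨hP, hPa⟩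
  have hQ' : IsStarProjection Q := ⟨hQ, hQa⟩
  have hnorm : ‖P ∘L Q ∘L P‖ ≤ μ₀ :=
    hcpt.norm_le_of_forall_hasEigenvalue_le (hP'.isPositive_comp_comp hQ') hμ₀0 fun μ hμ => by
      obtain ⟨g, hg⟩ := hμ.exists_hasEigenvector
      exact hmax μ g hg.2 hg.apply_eq_smul
  have hQP : ‖Q ∘L P‖ ≤ √μ₀ := by
    rw [← Real.sqrt_sq (norm_nonneg _), hP'.norm_comp_sq hQ']
    exact Real.sqrt_le_sqrt hnorm
  calc (1 - √μ₀) * ‖f‖ ^ 2 ≤ (1 - ‖Q ∘L P‖) * ‖f‖ ^ 2 := by gcongr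
    _ ≤ _ := hP'.one_sub_norm_comp_mul_norm_sq_le hQ' f

theorem spectral_lower_bound_two_proj {H : Type*} [NormedAddCommGroup H]
    [InnerProductSpace ℂ H] [CompleteSpace H] (P Q : H →L[ℂ] H)
    (hP : P ∘L P = P) (hPa : ContinuousLinearMap.adjoint P = P)
    (hQ : Q ∘L Q = Q) (hQa : ContinuousLinearMap.adjoint Q = Q)
    (hcpt : IsCompactOperator (P ∘L Q ∘L P))
    (μ₀ : ℝ) (hμ₀0 : 0 ≤ μ₀) (hμ₀1 : μ₀ < 1)
    (hmax : ∀ (μ : ℝ) (g : H), g ≠ 0 → (P ∘L Q ∘L P) g = (μ : ℂ) • g → μ ≤ μ₀) (f : H) :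
    (1 - Real.sqrt μ₀) * ‖f‖ ^ 2
      ≤ (inner ℂ (((2 : ℂ) • (1 : H →L[ℂ] H) - P - Q) f) f : ℂ).re :=
  spectral_lower_bound_two_proj_general P Q hP hPa hQ hQa hcpt μ₀ hμ₀0 hmax f
end

section
/- Let T = χ_{(−τ,τ)} + S_ω on L²(ℝ), where χ_{(−τ,τ)} is time-limiting to (−τ,τ) and S_ω = F χ_{(−ω,ω)} F* is band-limiting. Then 0 ∈ σ(T); in particular, T is not bounded below: the functions f_n(x) = e^{inx} e^{−(x−n)²} satisfy ‖f_n‖ = ‖f_0‖ > 0 while ‖T f_n‖ → 0. -/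
/-!
The modulated Gaussians `f_ν(x) = e^{iνx} e^{-(x-ν)²}` are translates of one another up to a
unimodular factor, so they all have the same `L²` norm. Completing the square,
`F* f_ν = (1/√2) e^{iν(x+ν)} e^{-(x+ν)²/4}` is a Gaussian centred at `-ν`. Hence on `(-τ, τ)` the
packet `f_ν`, and on `(-ω, ω)` its inverse transform, are uniformly `O(e^{-(ν-c)²/4})` with
`c = τ, ω`. As `F` is an isometry, `‖T f_ν‖ ≤ ‖χ_{(-τ,τ)} f_ν‖ + ‖χ_{(-ω,ω)} F* f_ν‖ → 0`, while
an inverse `S` of `T` would give `‖f_ν‖ ≤ ‖S‖ ‖T f_ν‖`.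
-/

open MeasureTheory Filter Topology Complex

section NotBoundedBelow

variable {ι 𝕜 E : Type*} [NontriviallyNormedField 𝕜] [NormedAddCommGroup E] [NormedSpace 𝕜 E]

theorem zero_mem_spectrum_of_tendsto_norm_apply {T : E →L[𝕜] E} {l : Filter ι} [l.NeBot]
    {g : ι → E} {c : ℝ} (hc : 0 < c) (hg : ∀ i, c ≤ ‖g i‖)
    (hT : Tendsto (fun i => ‖T (g i)‖) l (𝓝 0)) : (0 : 𝕜) ∈ spectrum 𝕜 T := by
  rw [spectrum.zero_mem_iff]
  rintro ⟨u, rfl⟩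
  set S : E →L[𝕜] E := ↑u⁻¹
  have hle : ∀ i, c ≤ ‖S‖ * ‖(u : E →L[𝕜] E) (g i)‖ := fun i =>
    calc c ≤ ‖g i‖ := hg i
      _ = ‖S ((u : E →L[𝕜] E) (g i))‖ := congrArg (‖·‖) (congrArg (· (g i)) u.inv_mul).symm
      _ ≤ ‖S‖ * ‖(u : E →L[𝕜] E) (g i)‖ := S.le_opNorm _
  have hlim := hT.const_mul ‖S‖
  rw [mul_zero] at hlim
  exact hc.not_ge (ge_of_tendsto' hlim hle)

end NotBoundedBelow

section IndicatorNorm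

variable {α ι E : Type*} [MeasurableSpace α] {μ : Measure α} [NormedAddCommGroup E]
  {p : ENNReal} {s : Set α}

theorem Lp.norm_le_of_ae_eq_indicator (hs : MeasurableSet s) (hμs : μ s ≠ ⊤) {f : Lp E p μ}
    {h : α → E} (hf : f =ᵐ[μ] s.indicator h) {C : ℝ} (hC : 0 ≤ C) (hh : ∀ x ∈ s, ‖h x‖ ≤ C) :
    ‖f‖ ≤ (μ s).toReal ^ p.toReal⁻¹ * C := by
  have hbound := eLpNorm_le_of_ae_bound (p := p) (ae_restrict_of_forall_mem (μ := μ) hs hh)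
  rw [Measure.restrict_apply_univ] at hbound
  rw [Lp.norm_def, eLpNorm_congr_ae hf, eLpNorm_indicator_eq_eLpNorm_restrict hs]
  refine (ENNReal.toReal_mono ?_ hbound).trans_eq ?_
  · exact ENNReal.mul_ne_top (ENNReal.rpow_ne_top_of_nonneg (by positivity) hμs)
      ENNReal.ofReal_ne_top
  · rw [ENNReal.toReal_mul, ENNReal.toReal_rpow, ENNReal.toReal_ofReal hC]

theorem Lp.tendsto_norm_of_ae_eq_indicator (hs : MeasurableSet s) (hμs : μ s ≠ ⊤)
    {l : Filter ι} {f : ι → Lp E p μ} {h : ι → α → E} (hf : ∀ i, f i =ᵐ[μ] s.indicator (h i))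
    {C : ι → ℝ} (hC₀ : ∀ i, 0 ≤ C i) (hC : Tendsto C l (𝓝 0))
    (hh : ∀ᶠ i in l, ∀ x ∈ s, ‖h i x‖ ≤ C i) : Tendsto (fun i => ‖f i‖) l (𝓝 0) := by
  have hlim := hC.const_mul ((μ s).toReal ^ p.toReal⁻¹)
  rw [mul_zero] at hlim
  exact squeeze_zero' (.of_forall fun _ => ENNReal.toReal_nonneg)
    (hh.mono fun i hi => Lp.norm_le_of_ae_eq_indicator hs hμs (hf i) (hC₀ i) hi) hlim

end IndicatorNorm

noncomputable def wavePacket (ν x : ℝ) : ℂ :=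
  cexp (I * ν * x) * cexp (-((x : ℂ) - ν) ^ 2)

noncomputable def wavePacketDual (ν x : ℝ) : ℂ :=
  (Real.sqrt 2 : ℂ)⁻¹ * cexp (I * ν * (x + ν)) * cexp (-((x : ℂ) + ν) ^ 2 / 4)

theorem norm_cexp_quadratic (b c d : ℂ) (x : ℝ) :
    ‖cexp (b * x ^ 2 + c * x + d)‖ = Real.exp (b.re * x ^ 2 + c.re * x + d.re) := by
  rw [norm_exp]
  simp [← ofReal_pow]

theorem memLp_two_cexp_quadratic {b : ℂ} (hb : b.re < 0) (c d : ℂ) :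
    MemLp (fun x : ℝ => cexp (b * x ^ 2 + c * x + d)) 2 volume := by
  rw [memLp_two_iff_integrable_sq_norm (by fun_prop)]
  refine (integrable_cexp_quadratic' (b := 2 * b) (by simp; linarith) (2 * c) (2 * d)).norm.congr
    (.of_forall fun x => ?_)
  simp only [norm_cexp_quadratic, ← Real.exp_nat_mul, mul_re, re_ofNat, im_ofNat]
  ring_nf

theorem wavePacket_eq_cexp_quadratic (ν : ℝ) :
    wavePacket ν = fun x : ℝ => cexp (-1 * x ^ 2 + (I * ν + 2 * ν) * x + -(ν : ℂ) ^ 2) := by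
  ext x
  rw [wavePacket, ← Complex.exp_add]
  ring_nf

theorem continuous_wavePacket (ν : ℝ) : Continuous (wavePacket ν) := by
  unfold wavePacket; fun_prop

theorem memLp_wavePacket (ν : ℝ) : MemLp (wavePacket ν) 2 volume := by
  rw [wavePacket_eq_cexp_quadratic]
  exact memLp_two_cexp_quadratic (by simp) _ _

theorem norm_wavePacket (ν x : ℝ) : ‖wavePacket ν x‖ = Real.exp (-(x - ν) ^ 2) := by
  have hphase : -((x : ℂ) - ν) ^ 2 = ((-(x - ν) ^ 2 : ℝ) : ℂ) := by push_cast; ring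
  rw [wavePacket, norm_mul, hphase, norm_exp_ofReal, norm_exp]
  simp

theorem norm_wavePacketDual (ν x : ℝ) :
    ‖wavePacketDual ν x‖ = (Real.sqrt 2)⁻¹ * Real.exp (-(x + ν) ^ 2 / 4) := by
  have hphase : -((x : ℂ) + ν) ^ 2 / 4 = ((-(x + ν) ^ 2 / 4 : ℝ) : ℂ) := by push_cast; ring
  rw [wavePacketDual, norm_mul, norm_mul, hphase, norm_exp_ofReal, norm_exp]
  simp [abs_of_nonneg (Real.sqrt_nonneg 2)]

theorem eLpNorm_wavePacket (ν : ℝ) {p : ENNReal} :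
    eLpNorm (wavePacket ν) p volume = eLpNorm (wavePacket 0) p volume := by
  rw [← eLpNorm_comp_measurePreserving (continuous_wavePacket 0).aestronglyMeasurable
    (measurePreserving_sub_right volume ν)]
  refine eLpNorm_congr_norm_ae (.of_forall fun x => ?_)
  simp [norm_wavePacket]

theorem eLpNorm_wavePacket_ne_zero (ν : ℝ) : eLpNorm (wavePacket ν) 2 volume ≠ 0 := by
  rw [Ne, eLpNorm_eq_zero_iff (continuous_wavePacket ν).aestronglyMeasurable two_ne_zero,
    (continuous_wavePacket ν).ae_eq_iff_eq volume continuous_zero]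
  intro h
  simpa [wavePacket] using congrFun h ν

theorem wavePacketDual_eq_cexp_quadratic (ν : ℝ) :
    wavePacketDual ν = fun x : ℝ => (Real.sqrt 2 : ℂ)⁻¹ *
      cexp (-(1 / 4) * x ^ 2 + (I * ν - ν / 2) * x + (I * ν ^ 2 - ν ^ 2 / 4)) := by
  ext x
  rw [wavePacketDual, mul_assoc, ← Complex.exp_add]
  ring_nf

theorem memLp_wavePacketDual (ν : ℝ) : MemLp (wavePacketDual ν) 2 volume := by
  rw [wavePacketDual_eq_cexp_quadratic]
  exact (memLp_two_cexp_quadratic (by norm_num) _ _).const_mul _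

theorem integrable_wavePacketDual (ν : ℝ) : Integrable (wavePacketDual ν) volume := by
  rw [wavePacketDual_eq_cexp_quadratic]
  exact (integrable_cexp_quadratic' (by norm_num) _ _).const_mul _

theorem fourierIntegral_wavePacketDual (ν ξ : ℝ) :
    (Real.sqrt (2 * Real.pi) : ℂ)⁻¹ * ∫ x : ℝ, cexp (-(I * x * ξ)) * wavePacketDual ν x =
      wavePacket ν ξ := by
  have hintegrand : ∀ x : ℝ, cexp (-(I * x * ξ)) * wavePacketDual ν x =
      (Real.sqrt 2 : ℂ)⁻¹ * cexp (-(1 / 4) * x ^ 2 + (I * ν - ν / 2 - I * ξ) * x +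
        (I * ν ^ 2 - ν ^ 2 / 4)) := by
    intro x
    rw [wavePacketDual_eq_cexp_quadratic, mul_left_comm, ← Complex.exp_add]
    ring_nf
  simp_rw [hintegrand]
  rw [integral_const_mul, integral_cexp_quadratic (by norm_num : (-(1 / 4) : ℂ).re < 0)]
  have hsqrt : (Real.pi / -(-(1 / 4)) : ℂ) ^ (1 / 2 : ℂ) =
      Real.sqrt 2 * Real.sqrt (2 * Real.pi) := by
    rw [show (Real.pi / -(-(1 / 4)) : ℂ) = ((4 * Real.pi : ℝ) : ℂ) by push_cast; ring,
      show (1 / 2 : ℂ) = ((1 / 2 : ℝ) : ℂ) by norm_num, ← ofReal_cpow (by positivity),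
      ← Real.sqrt_eq_rpow, ← ofReal_mul, ← Real.sqrt_mul zero_le_two]
    ring_nf
  have hexp : cexp ((I * ν ^ 2 - ν ^ 2 / 4) -
      (I * ν - ν / 2 - I * ξ) ^ 2 / (4 * -(1 / 4))) = wavePacket ν ξ := by
    rw [wavePacket, ← Complex.exp_add]
    congr 1
    linear_combination ((ν : ℂ) - ξ) ^ 2 * I_sq
  have h2 : (Real.sqrt 2 : ℂ) ≠ 0 := by norm_cast; positivity
  have h2π : (Real.sqrt (2 * Real.pi) : ℂ) ≠ 0 := by norm_cast; positivity
  rw [hsqrt, hexp]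
  field_simp

theorem norm_wavePacket_le {a ν x : ℝ} (ha : a ≤ ν) (hx : x ∈ Set.Ioo (-a) a) :
    ‖wavePacket ν x‖ ≤ Real.exp (-(ν - a) ^ 2) := by
  rw [norm_wavePacket, Real.exp_le_exp]
  nlinarith [hx.2]

theorem norm_wavePacketDual_le {a ν x : ℝ} (ha : a ≤ ν) (hx : x ∈ Set.Ioo (-a) a) :
    ‖wavePacketDual ν x‖ ≤ Real.exp (-(ν - a) ^ 2 / 4) := by
  rw [norm_wavePacketDual]
  refine (mul_le_of_le_one_left (Real.exp_nonneg _)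
    (inv_le_one_of_one_le₀ (Real.one_le_sqrt.2 one_le_two))).trans ?_
  rw [Real.exp_le_exp]
  nlinarith [hx.1]

theorem tendsto_exp_neg_sq_sub_div (a : ℝ) {k : ℝ} (hk : 0 < k) :
    Tendsto (fun ν : ℝ => Real.exp (-(ν - a) ^ 2 / k)) atTop (𝓝 0) := by
  refine Real.tendsto_exp_atBot.comp (Tendsto.atBot_div_const hk ?_)
  exact tendsto_neg_atTop_atBot.comp
    ((tendsto_pow_atTop two_ne_zero).comp (tendsto_atTop_add_const_right _ (-a) tendsto_id))

theorem wavePacket_natCast (n : ℕ) :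
    wavePacket n = fun x : ℝ => cexp (I * n * x) * cexp (-((x : ℂ) - n) ^ 2) := by
  ext x
  simp [wavePacket]

theorem Lp.coeFn_apply_ae_eq_indicator {α : Type*} [MeasurableSpace α] {μ : Measure α}
    {p : ENNReal} {s : Set α} {P : Lp ℂ p μ → Lp ℂ p μ}
    (hP : ∀ f : Lp ℂ p μ, (P f : α → ℂ) =ᵐ[μ] fun x => s.indicator (fun _ => (1 : ℂ)) x * f x)
    {f : Lp ℂ p μ} {h : α → ℂ} (hf : f =ᵐ[μ] h) : (P f : α → ℂ) =ᵐ[μ] s.indicator h := by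
  filter_upwards [hP f, hf] with x hPx hfx
  rw [hPx, hfx, ← Set.indicator_mul_left]
  simp only [one_mul]

section TimeBandLimiting

local notation "L2" => Lp ℂ 2 (volume : Measure ℝ)

theorem tendsto_norm_indicatorIoo_apply_wavePacket {a : ℝ} {P : L2 → L2}
    (hP : ∀ f : L2, (P f : ℝ → ℂ) =ᵐ[volume]
      fun x => (Set.Ioo (-a) a).indicator (fun _ => (1 : ℂ)) x * f x)
    {g : ℕ → L2} (hg : ∀ n : ℕ, g n =ᵐ[volume] wavePacket n) :
    Tendsto (fun n => ‖P (g n)‖) atTop (𝓝 0) := by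
  refine Lp.tendsto_norm_of_ae_eq_indicator (C := fun n : ℕ => Real.exp (-(n - a) ^ 2))
    measurableSet_Ioo (by simp) (fun n => Lp.coeFn_apply_ae_eq_indicator hP (hg n))
    (fun _ => (Real.exp_pos _).le) (by simpa only [div_one, Function.comp_def] using
      (tendsto_exp_neg_sq_sub_div a one_pos).comp tendsto_natCast_atTop_atTop) ?_
  filter_upwards [tendsto_natCast_atTop_atTop.eventually_ge_atTop a] with n hn x hx
  exact norm_wavePacket_le hn hx

theorem tendsto_norm_indicatorIoo_apply_wavePacketDual {a : ℝ} {P : L2 → L2}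
    (hP : ∀ f : L2, (P f : ℝ → ℂ) =ᵐ[volume]
      fun x => (Set.Ioo (-a) a).indicator (fun _ => (1 : ℂ)) x * f x)
    {g : ℕ → L2} (hg : ∀ n : ℕ, g n =ᵐ[volume] wavePacketDual n) :
    Tendsto (fun n => ‖P (g n)‖) atTop (𝓝 0) := by
  refine Lp.tendsto_norm_of_ae_eq_indicator measurableSet_Ioo (by simp)
    (fun n => Lp.coeFn_apply_ae_eq_indicator hP (hg n)) (fun _ => (Real.exp_pos _).le)
    ((tendsto_exp_neg_sq_sub_div a four_pos).comp tendsto_natCast_atTop_atTop) ?_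
  filter_upwards [tendsto_natCast_atTop_atTop.eventually_ge_atTop a] with n hn x hx
  exact norm_wavePacketDual_le hn hx

theorem coeFn_symm_ae_eq_wavePacketDual (F : L2 ≃ₗᵢ[ℂ] L2)
    (hF : ∀ f : L2, Integrable (f : ℝ → ℂ) volume →
      (F f : ℝ → ℂ) =ᵐ[volume] fun ξ : ℝ =>
        (Real.sqrt (2 * Real.pi) : ℂ)⁻¹ * ∫ x : ℝ, cexp (-(I * x * ξ)) * f x)
    {g : L2} {ν : ℝ} (hg : g =ᵐ[volume] wavePacket ν) :
    (F.symm g : ℝ → ℂ) =ᵐ[volume] wavePacketDual ν := by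
  set u : L2 := (memLp_wavePacketDual ν).toLp
  have hu : u =ᵐ[volume] wavePacketDual ν := MemLp.coeFn_toLp _
  have hFu : F u = g := by
    refine Lp.ext (((hF u ((integrable_wavePacketDual ν).congr hu.symm)).trans ?_).trans hg.symm)
    filter_upwards with ξ
    rw [← fourierIntegral_wavePacketDual]
    congr 1
    refine integral_congr_ae ?_
    filter_upwards [hu] with x hx
    rw [hx]
  rw [← hFu, F.symm_apply_apply]
  exact hu

end TimeBandLimiting

theorem zero_mem_spectrum_time_plus_band_general (τ ω : ℝ)
    (F : Lp ℂ 2 (volume : Measure ℝ) ≃ₗᵢ[ℂ] Lp ℂ 2 (volume : Measure ℝ))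
    (hF : ∀ f : Lp ℂ 2 (volume : Measure ℝ), Integrable (f : ℝ → ℂ) volume →
      (F f : ℝ → ℂ) =ᵐ[volume] fun ξ : ℝ =>
        (Real.sqrt (2 * Real.pi) : ℂ)⁻¹ * ∫ x : ℝ, Complex.exp (-(Complex.I * x * ξ)) * f x)
    (Pτ Pω : Lp ℂ 2 (volume : Measure ℝ) →L[ℂ] Lp ℂ 2 (volume : Measure ℝ))
    (hPτ : ∀ f : Lp ℂ 2 (volume : Measure ℝ),
      (Pτ f : ℝ → ℂ) =ᵐ[volume] fun x => (Set.Ioo (-τ) τ).indicator (fun _ => (1 : ℂ)) x * f x)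
    (hPω : ∀ f : Lp ℂ 2 (volume : Measure ℝ),
      (Pω f : ℝ → ℂ) =ᵐ[volume] fun x => (Set.Ioo (-ω) ω).indicator (fun _ => (1 : ℂ)) x * f x) :
    (0 : ℂ) ∈ spectrum ℂ
      (Pτ + (F.toContinuousLinearEquiv : Lp ℂ 2 (volume : Measure ℝ) →L[ℂ] Lp ℂ 2 (volume : Measure ℝ))
            ∘L Pω ∘L (F.symm.toContinuousLinearEquiv :
              Lp ℂ 2 (volume : Measure ℝ) →L[ℂ] Lp ℂ 2 (volume : Measure ℝ))) ∧
    ∀ g : ℕ → Lp ℂ 2 (volume : Measure ℝ),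
      (∀ n : ℕ, (g n : ℝ → ℂ) =ᵐ[volume] fun x : ℝ =>
        Complex.exp (Complex.I * n * x) * Complex.exp (-((x : ℂ) - n) ^ 2)) →
      (∀ n : ℕ, ‖g n‖ = ‖g 0‖) ∧ 0 < ‖g 0‖ ∧
      Tendsto (fun n : ℕ => ‖(Pτ + (F.toContinuousLinearEquiv :
          Lp ℂ 2 (volume : Measure ℝ) →L[ℂ] Lp ℂ 2 (volume : Measure ℝ))
            ∘L Pω ∘L (F.symm.toContinuousLinearEquiv :
              Lp ℂ 2 (volume : Measure ℝ) →L[ℂ] Lp ℂ 2 (volume : Measure ℝ))) (g n)‖)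
        atTop (nhds 0) := by
  set T := Pτ + (F.toContinuousLinearEquiv : Lp ℂ 2 (volume : Measure ℝ) →L[ℂ] _)
    ∘L Pω ∘L (F.symm.toContinuousLinearEquiv : Lp ℂ 2 (volume : Measure ℝ) →L[ℂ] _)
  have hpackets : ∀ g : ℕ → Lp ℂ 2 (volume : Measure ℝ),
      (∀ n : ℕ, g n =ᵐ[volume] wavePacket n) →
      (∀ n, ‖g n‖ = ‖g 0‖) ∧ 0 < ‖g 0‖ ∧ Tendsto (fun n => ‖T (g n)‖) atTop (𝓝 0) := by
    intro g hg
    have hnorm (n : ℕ) : ‖g n‖ = (eLpNorm (wavePacket 0) 2 volume).toReal := by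
      rw [Lp.norm_def, eLpNorm_congr_ae (hg n), eLpNorm_wavePacket]
    have hTτ := tendsto_norm_indicatorIoo_apply_wavePacket hPτ hg
    have hTω := tendsto_norm_indicatorIoo_apply_wavePacketDual hPω
      (fun n => coeFn_symm_ae_eq_wavePacketDual F hF (hg n))
    refine ⟨fun n => by rw [hnorm, hnorm], ?_, ?_⟩
    · rw [hnorm]
      exact ENNReal.toReal_pos (eLpNorm_wavePacket_ne_zero 0) (memLp_wavePacket 0).eLpNorm_ne_top
    · refine squeeze_zero (fun _ => norm_nonneg _) (fun n => ?_) (by simpa using hTτ.add hTω)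
      exact (norm_add_le _ _).trans_eq (by simp)
  simp only [← wavePacket_natCast] at hpackets ⊢
  refine ⟨?_, hpackets⟩
  obtain ⟨hconst, hpos, hlim⟩ := hpackets (fun n => (memLp_wavePacket n).toLp)
    (fun n => MemLp.coeFn_toLp _)
  exact zero_mem_spectrum_of_tendsto_norm_apply hpos (fun n => (hconst n).ge) hlim

theorem zero_mem_spectrum_time_plus_band (τ ω : ℝ) (hτ : 0 < τ) (hω : 0 < ω)
    (F : Lp ℂ 2 (volume : Measure ℝ) ≃ₗᵢ[ℂ] Lp ℂ 2 (volume : Measure ℝ))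
    (hF : ∀ f : Lp ℂ 2 (volume : Measure ℝ), Integrable (f : ℝ → ℂ) volume →
      (F f : ℝ → ℂ) =ᵐ[volume] fun ξ : ℝ =>
        (Real.sqrt (2 * Real.pi) : ℂ)⁻¹ * ∫ x : ℝ, Complex.exp (-(Complex.I * x * ξ)) * f x)
    (Pτ Pω : Lp ℂ 2 (volume : Measure ℝ) →L[ℂ] Lp ℂ 2 (volume : Measure ℝ))
    (hPτ : ∀ f : Lp ℂ 2 (volume : Measure ℝ),
      (Pτ f : ℝ → ℂ) =ᵐ[volume] fun x => (Set.Ioo (-τ) τ).indicator (fun _ => (1 : ℂ)) x * f x)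
    (hPω : ∀ f : Lp ℂ 2 (volume : Measure ℝ),
      (Pω f : ℝ → ℂ) =ᵐ[volume] fun x => (Set.Ioo (-ω) ω).indicator (fun _ => (1 : ℂ)) x * f x) :
    (0 : ℂ) ∈ spectrum ℂ
      (Pτ + (F.toContinuousLinearEquiv : Lp ℂ 2 (volume : Measure ℝ) →L[ℂ] Lp ℂ 2 (volume : Measure ℝ))
            ∘L Pω ∘L (F.symm.toContinuousLinearEquiv :
              Lp ℂ 2 (volume : Measure ℝ) →L[ℂ] Lp ℂ 2 (volume : Measure ℝ))) ∧
    ∀ g : ℕ → Lp ℂ 2 (volume : Measure ℝ),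
      (∀ n : ℕ, (g n : ℝ → ℂ) =ᵐ[volume] fun x : ℝ =>
        Complex.exp (Complex.I * n * x) * Complex.exp (-((x : ℂ) - n) ^ 2)) →
      (∀ n : ℕ, ‖g n‖ = ‖g 0‖) ∧ 0 < ‖g 0‖ ∧
      Tendsto (fun n : ℕ => ‖(Pτ + (F.toContinuousLinearEquiv :
          Lp ℂ 2 (volume : Measure ℝ) →L[ℂ] Lp ℂ 2 (volume : Measure ℝ))
            ∘L Pω ∘L (F.symm.toContinuousLinearEquiv :
              Lp ℂ 2 (volume : Measure ℝ) →L[ℂ] Lp ℂ 2 (volume : Measure ℝ))) (g n)‖)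
        atTop (nhds 0) :=
  zero_mem_spectrum_time_plus_band_general τ ω F hF Pτ Pω hPτ hPω
end
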